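/- arXiv:0809.0953 — 3 statements merged into one kernel-verified Lean document; each statement's English description precedes it below -/
import Mathlib

section
/- Let V : ℝ → ℝ be smooth, nonnegative, even, with V''(r) → V''_∞ > 0 as |r| → ∞. Then there exist constants C > 0 and C' ≥ 0 such that V'(r)^2 ≤ C (r * V'(r) + C') for all r ∈ ℝ. -/
/-!
Far out, `V'' ∈ (V∞/2, 2V∞)`, so `V'` lies between two lines of slopes `V∞/2` and `2V∞`; for
large `r` this gives `0 ≤ V' r ≤ 3V∞ r`, hence `V' r ^ 2 ≤ 3V∞ r V' r`. Since `V'` is odd, the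
same holds for very negative `r`, and on the compact set in between the continuous function
`V'² - 3V∞ r V'` is bounded, which is what `C'` absorbs.
-/

open Filter Set Topology

theorem Function.Even.odd_deriv {f : ℝ → ℝ} (hf : f.Even) : (deriv f).Odd := fun x => by
  have h : deriv (fun y => f (-y)) x = -deriv f (-x) := deriv_comp_neg f x
  rw [show (fun y => f (-y)) = f from funext hf] at h
  linarith

theorem Continuous.bddAbove_range_of_eventually_le {g : ℝ → ℝ} (hg : Continuous g) {c : ℝ}
    (hbot : ∀ᶠ x in atBot, g x ≤ c) (htop : ∀ᶠ x in atTop, g x ≤ c) : BddAbove (range g) := by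
  have hcocompact : ∀ᶠ x in cocompact ℝ, g x ≤ c := by
    rw [cocompact_eq_atBot_atTop]
    exact eventually_sup.2 ⟨hbot, htop⟩
  obtain ⟨x₀, hx₀⟩ := (hg.max continuous_const).exists_forall_ge' 0
    (hcocompact.mono fun x hx => max_le (hx.trans (le_max_right _ _)) (le_max_right _ _))
  exact ⟨max (g x₀) c, forall_mem_range.2 fun y => (le_max_left _ _).trans (hx₀ y)⟩

theorem eventually_sq_le_mul_mul_of_tendsto_deriv {f : ℝ → ℝ} {L : ℝ} (hf : Differentiable ℝ f)
    (hL : 0 < L) (hf' : Tendsto (deriv f) atTop (𝓝 L)) :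
    ∀ᶠ r in atTop, f r ^ 2 ≤ 3 * L * (r * f r) := by
  obtain ⟨R, hR⟩ := eventually_atTop.1
    (hf'.eventually (Ioo_mem_nhds (half_lt_self hL) (by linarith : L < 2 * L)))
  have hderiv : ∀ x ∈ interior (Ici R), deriv f x ∈ Ioo (L / 2) (2 * L) :=
    fun x hx => hR x (interior_subset hx)
  have hcont := hf.continuous.continuousOn (s := Ici R)
  have hdiff := hf.differentiableOn (s := interior (Ici R))
  have hlow := (convex_Ici R).mul_sub_le_image_sub_of_le_deriv hcont hdiff
    fun x hx => (hderiv x hx).1.le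
  have hup := (convex_Ici R).image_sub_le_mul_sub_of_deriv_le hcont hdiff
    fun x hx => (hderiv x hx).2.le
  filter_upwards [eventually_ge_atTop R, eventually_ge_atTop (2 * (|f R| + L * |R|) / L)]
    with r hRr hr
  have hLr : 2 * (|f R| + L * |R|) ≤ L * r := by rwa [div_le_iff₀' hL] at hr
  have hfr_ge := hlow R self_mem_Ici r hRr hRr
  have hfr_le := hup R self_mem_Ici r hRr hRr
  have hLR : |L * R| = L * |R| := by rw [abs_mul, abs_of_pos hL]
  have hpos : 0 ≤ f r := by
    linarith [neg_abs_le (f R), le_abs_self (L * R), abs_nonneg (L * R)]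
  have hlin : f r ≤ 3 * L * r := by
    linarith [le_abs_self (f R), abs_nonneg (f R), neg_abs_le (L * R)]
  calc f r ^ 2 = f r * f r := sq _
    _ ≤ 3 * L * r * f r := mul_le_mul_of_nonneg_right hlin hpos
    _ = 3 * L * (r * f r) := by ring

theorem Function.Odd.exists_sq_le_mul_add {f : ℝ → ℝ} (hodd : f.Odd) (hf : Continuous f)
    {C : ℝ} (hC : 0 < C) (htop : ∀ᶠ r in atTop, f r ^ 2 ≤ C * (r * f r)) :
    ∃ C' ≥ 0, ∀ r, f r ^ 2 ≤ C * (r * f r + C') := by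
  set g : ℝ → ℝ := fun r => f r ^ 2 - C * (r * f r)
  have hg_top : ∀ᶠ r in atTop, g r ≤ 0 := htop.mono fun r hr => sub_nonpos.2 hr
  have hg_bot : ∀ᶠ r in atBot, g r ≤ 0 := by
    filter_upwards [tendsto_neg_atBot_atTop.eventually hg_top] with r hr
    simpa [g, hodd r] using hr
  obtain ⟨K, hK⟩ := (by fun_prop : Continuous g).bddAbove_range_of_eventually_le hg_bot hg_top
  refine ⟨max K 0 / C, by positivity, fun r => ?_⟩
  have hr : g r ≤ K := hK ⟨r, rfl⟩
  rw [mul_add, mul_div_cancel₀ _ hC.ne']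
  linarith [le_max_left K 0]

theorem Vprime_sq_bound_general
    (V : ℝ → ℝ) (Vinf : ℝ)
    (hV : ContDiff ℝ 2 V)
    (hVeven : ∀ r, V (-r) = V r)
    (hVinf : 0 < Vinf)
    (htop : Tendsto (deriv (deriv V)) atTop (nhds Vinf)) :
    ∃ C > 0, ∃ C' ≥ 0, ∀ r : ℝ, (deriv V r) ^ 2 ≤ C * (r * deriv V r + C') := by
  have hV' : Differentiable ℝ (deriv V) := hV.differentiable_deriv_two
  exact ⟨3 * Vinf, by positivity, Function.Even.odd_deriv hVeven |>.exists_sq_le_mul_add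
    hV'.continuous (by positivity)
    (eventually_sq_le_mul_mul_of_tendsto_deriv hV' hVinf htop)⟩

theorem Vprime_sq_bound
    (V : ℝ → ℝ) (Vinf : ℝ)
    (hV : ContDiff ℝ 2 V)
    (hVnonneg : ∀ r, 0 ≤ V r)
    (hVeven : ∀ r, V (-r) = V r)
    (hVinf : 0 < Vinf)
    (htop : Tendsto (deriv (deriv V)) atTop (nhds Vinf))
    (hbot : Tendsto (deriv (deriv V)) atBot (nhds Vinf)) :
    ∃ C > 0, ∃ C' ≥ 0, ∀ r : ℝ, (deriv V r) ^ 2 ≤ C * (r * deriv V r + C') :=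
  Vprime_sq_bound_general V Vinf hV hVeven hVinf htop
end

section
/- Let H be a real inner product space, L : H → H a linear map of the form L = A + S with A antisymmetric (⟨Au, v⟩ = −⟨u, Av⟩) and S symmetric negative semidefinite. If h ∈ H satisfies S h = −c h for some c > 0, and u solves λ u − L u = h with λ > 0, then ⟨u, −S u⟩ ≤ c⁻¹ ⟨h, h⟩ and λ ⟨u, u⟩ ≤ c⁻¹ ⟨h, h⟩. -/
/-!
Pairing the resolvent equation with `u` kills the antisymmetric part and gives the energy identity
`λ‖u‖² + ⟪u, -S u⟫ = ⟪u, h⟫`. Since `-S` is a nonnegative form, expanding `⟪v, -S v⟫ ≥ 0` at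
`v = u - c⁻¹ h` and using `S h = -c h` gives `2⟪u, h⟫ ≤ ⟪u, -S u⟫ + c⁻¹‖h‖²`. Combining the two,
`2λ‖u‖² + ⟪u, -S u⟫ ≤ c⁻¹‖h‖²`, and both terms on the left are nonnegative.
-/

open scoped RealInnerProductSpace

section

variable {H : Type*} [NormedAddCommGroup H] [InnerProductSpace ℝ H]

theorem real_inner_self_apply_eq_zero_of_antisymm {A : H →ₗ[ℝ] H}
    (hA : ∀ u v : H, ⟪A u, v⟫ = -⟪u, A v⟫) (u : H) : ⟪u, A u⟫ = 0 := by
  have h := hA u u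
  rw [real_inner_comm] at h
  linarith

theorem resolvent_energy_identity {A S : H →ₗ[ℝ] H}
    (hA : ∀ u v : H, ⟪A u, v⟫ = -⟪u, A v⟫) {lam : ℝ} {u h : H}
    (hres : lam • u - A u - S u = h) :
    lam * ⟪u, u⟫ + ⟪u, -(S u)⟫ = ⟪u, h⟫ := by
  rw [← hres, inner_sub_right, inner_sub_right, real_inner_smul_right, inner_neg_right,
    real_inner_self_apply_eq_zero_of_antisymm hA]
  ring

theorem two_mul_inner_le_of_apply_eq_neg_smul {S : H →ₗ[ℝ] H} (hSsym : S.IsSymmetric)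
    (hSneg : ∀ v : H, ⟪v, S v⟫ ≤ 0) {h : H} {c : ℝ} (hc : c ≠ 0) (hEigen : S h = -c • h)
    (u : H) : 2 * ⟪u, h⟫ ≤ ⟪u, -(S u)⟫ + c⁻¹ * ⟪h, h⟫ := by
  have hS_shift : S (u - c⁻¹ • h) = S u + h := by
    rw [map_sub, map_smul, hEigen, smul_smul, mul_neg, inv_mul_cancel₀ hc, neg_smul, one_smul,
      sub_neg_eq_add]
  have hh_Su : ⟪h, S u⟫ = -c * ⟪u, h⟫ := by
    rw [← hSsym, hEigen, real_inner_smul_left, real_inner_comm]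
  have hnonpos := hSneg (u - c⁻¹ • h)
  rw [hS_shift, inner_add_right, inner_sub_left, inner_sub_left, real_inner_smul_left,
    real_inner_smul_left, hh_Su, ← mul_assoc, mul_neg, inv_mul_cancel₀ hc] at hnonpos
  rw [inner_neg_right]
  linarith

end

theorem resolvent_energy_bounds
    {H : Type*} [NormedAddCommGroup H] [InnerProductSpace ℝ H]
    (A S : H →ₗ[ℝ] H)
    (hA : ∀ u v : H, ⟪A u, v⟫ = -⟪u, A v⟫)
    (hSsym : ∀ u v : H, ⟪S u, v⟫ = ⟪u, S v⟫)
    (hSneg : ∀ v : H, ⟪v, S v⟫ ≤ 0)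
    (h : H) (c : ℝ) (hc : 0 < c) (hEigen : S h = -c • h)
    (lam : ℝ) (hlam : 0 < lam) (u : H)
    (hres : lam • u - A u - S u = h) :
    ⟪u, -(S u)⟫ ≤ c⁻¹ * ⟪h, h⟫ ∧ lam * ⟪u, u⟫ ≤ c⁻¹ * ⟪h, h⟫ := by
  have henergy := resolvent_energy_identity hA hres
  have hcross := two_mul_inner_le_of_apply_eq_neg_smul hSsym hSneg hc.ne' hEigen u
  have hdissip : 0 ≤ ⟪u, -(S u)⟫ := by
    rw [inner_neg_right]
    exact neg_nonneg.mpr (hSneg u)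
  have hkinetic : 0 ≤ lam * ⟪u, u⟫ := mul_nonneg hlam.le real_inner_self_nonneg
  constructor <;> linarith
end

section
/- Let H be a finite-dimensional real inner product space, A antisymmetric and S symmetric negative definite linear operators, L = A + S invertible considered on the orthogonal complement of constants. For h in the range of L, the quantity ⟨A h, (−L)⁻¹ (A h)⟩ = ⟨h, (−S) h⟩ − ⟨S h, (−L)⁻¹ (S h)⟩, and this quantity is nonnegative. -/
open scoped RealInnerProductSpace

/-!
Write `M = -(A + S)` and `G` for its inverse. Antisymmetry of `A` kills its quadratic form, so
`⟪x, G x⟫ = ⟪M (G x), G x⟫ = -⟪S (G x), G x⟫` for every `x`; this is nonnegative when `S` is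
negative semidefinite. Since `A h + S h = -M h`, the vectors `u = G (A h)` and `w = G (S h)` satisfy
`u = -(h + w)`, and expanding the quadratic form of the symmetric `S` at `h + w` gives the identity.
-/

section

variable {H : Type*} [NormedAddCommGroup H] [InnerProductSpace ℝ H] {A S : H →ₗ[ℝ] H}

lemma inner_map_self_eq_zero_of_antisymm (hA : ∀ u v : H, ⟪A u, v⟫ = -⟪u, A v⟫) (v : H) :
    ⟪A v, v⟫ = 0 := by
  linarith [hA v v, real_inner_comm v (A v)]

lemma inner_self_map_eq_of_rightInverse (hA : ∀ u v : H, ⟪A u, v⟫ = -⟪u, A v⟫)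
    {G : H →ₗ[ℝ] H} (hG : ∀ w : H, (-(A + S)) (G w) = w) (x : H) :
    ⟪x, G x⟫ = -⟪S (G x), G x⟫ := by
  have hx : ⟪x, G x⟫ = ⟪(-(A + S)) (G x), G x⟫ := by rw [hG]
  rw [hx, LinearMap.neg_apply, LinearMap.add_apply, inner_neg_left, inner_add_left,
    inner_map_self_eq_zero_of_antisymm hA, zero_add]

lemma inner_self_map_nonneg_of_rightInverse (hA : ∀ u v : H, ⟪A u, v⟫ = -⟪u, A v⟫)
    (hS : ∀ v : H, ⟪v, S v⟫ ≤ 0) {G : H →ₗ[ℝ] H} (hG : ∀ w : H, (-(A + S)) (G w) = w)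
    (x : H) : 0 ≤ ⟪x, G x⟫ := by
  rw [inner_self_map_eq_of_rightInverse hA hG, real_inner_comm]
  linarith [hS (G x)]

lemma LinearMap.IsSymmetric.inner_map_add_add (hS : S.IsSymmetric) (a b : H) :
    ⟪S (a + b), a + b⟫ = ⟪S a, a⟫ + 2 * ⟪S a, b⟫ + ⟪S b, b⟫ := by
  have hba : ⟪S b, a⟫ = ⟪S a, b⟫ := by rw [hS b a, real_inner_comm]
  simp only [map_add, inner_add_left, inner_add_right, hba]
  ring

end

theorem green_kubo_algebraic_identity_general
    {H : Type*} [NormedAddCommGroup H] [InnerProductSpace ℝ H]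
    (A S : H →ₗ[ℝ] H)
    (hA : ∀ u v : H, ⟪A u, v⟫ = -⟪u, A v⟫)
    (hSsym : ∀ u v : H, ⟪S u, v⟫ = ⟪u, S v⟫)
    (hSnegdef : ∀ v : H, v ≠ 0 → ⟪v, S v⟫ < 0)
    (Linv : H →ₗ[ℝ] H)
    (hLinv1 : ∀ w : H, (-(A + S)) (Linv w) = w)
    (hLinv2 : ∀ w : H, Linv ((-(A + S)) w) = w)
    (h : H) :
    ⟪A h, Linv (A h)⟫ = ⟪h, -(S h)⟫ - ⟪S h, Linv (S h)⟫ ∧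
    0 ≤ ⟪A h, Linv (A h)⟫ := by
  have hSnonpos : ∀ v : H, ⟪v, S v⟫ ≤ 0 := fun v ↦ by
    rcases eq_or_ne v 0 with rfl | hv
    · simp
    · exact (hSnegdef v hv).le
  refine ⟨?_, inner_self_map_nonneg_of_rightInverse hA hSnonpos hLinv1 (A h)⟩
  set w := Linv (S h)
  have hu : Linv (A h) = -(h + w) := by
    have hsum : A h + (-(A + S)) h + S h = 0 := by simp
    rw [eq_neg_iff_add_eq_zero]
    calc Linv (A h) + (h + w) = Linv (A h + (-(A + S)) h + S h) := by
          rw [map_add, map_add, hLinv2]; abel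
      _ = 0 := by rw [hsum, map_zero]
  have hw := inner_self_map_eq_of_rightInverse hA hLinv1 (S h)
  have hSh : ⟪h, -(S h)⟫ = -⟪S h, h⟫ := by rw [inner_neg_right, real_inner_comm]
  rw [inner_self_map_eq_of_rightInverse hA hLinv1, hu, map_neg, inner_neg_left, inner_neg_right,
    neg_neg, LinearMap.IsSymmetric.inner_map_add_add hSsym, hSh]
  linarith

theorem green_kubo_algebraic_identity
    {H : Type*} [NormedAddCommGroup H] [InnerProductSpace ℝ H]
    [FiniteDimensional ℝ H]
    (A S : H →ₗ[ℝ] H)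
    (hA : ∀ u v : H, ⟪A u, v⟫ = -⟪u, A v⟫)
    (hSsym : ∀ u v : H, ⟪S u, v⟫ = ⟪u, S v⟫)
    (hSnegdef : ∀ v : H, v ≠ 0 → ⟪v, S v⟫ < 0)
    (Linv : H →ₗ[ℝ] H)
    (hLinv1 : ∀ w : H, (-(A + S)) (Linv w) = w)
    (hLinv2 : ∀ w : H, Linv ((-(A + S)) w) = w)
    (h : H) :
    ⟪A h, Linv (A h)⟫ = ⟪h, -(S h)⟫ - ⟪S h, Linv (S h)⟫ ∧
    0 ≤ ⟪A h, Linv (A h)⟫ :=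
  green_kubo_algebraic_identity_general A S hA hSsym hSnegdef Linv hLinv1 hLinv2 h
end
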